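/- The tempered softmax is invariant along the normal direction: if θ̌ = log_t(p̃/λ̃) for a positive vector p̃ and positive scalar λ̃, then for any r ∈ ℝ, applying the tempered softmax f*(θ)_i = exp_t(θ_i)/(Σ_j exp_t(θ_j)^(1/t*))^(t*) to θ̌ + r·p̃^(1-t) gives the same result as applying it to θ̌, provided all exp_t values remain positive. -/

import Mathlib

noncomputable def tlog (t x : ℝ) : ℝ := (x ^ (1 - t) - 1) / (1 - t)

noncomputable def texp (t y : ℝ) : ℝ := (1 + (1 - t) * y) ^ (1 / (1 - t))

noncomputable def tsoftmax {ι : Type*} [Fintype ι] (t tstar : ℝ) (θ : ι → ℝ) (i : ι) : ℝ :=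
  texp t (θ i) / (∑ j, (texp t (θ j)) ^ (1 / tstar)) ^ tstar

/-!
Since `1 + (1 - t) tlog t x = x ^ (1 - t)`, adding `r p̃ ^ (1 - t)` to `θ̌ = tlog t (p̃ / λ)` turns
`1 + (1 - t) θ̌ = (p̃ / λ) ^ (1 - t)` into its product with the constant
`1 + (1 - t) r λ ^ (1 - t)`, which is positive because the shifted `exp_t` values are. So the
shifted point is again `tlog t` of a positive multiple of `p̃ / λ`, and the tempered softmax of
`tlog t q` depends on `q` only up to a positive scalar, the normalisation being homogeneous of
degree one.
-/

section Tempered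

variable {t : ℝ}

lemma one_add_mul_tlog (ht : t ≠ 1) (x : ℝ) : 1 + (1 - t) * tlog t x = x ^ (1 - t) := by
  unfold tlog
  field_simp
  ring

lemma texp_rpow_one_sub (ht : t ≠ 1) {y : ℝ} (hy : 0 ≤ 1 + (1 - t) * y) :
    texp t y ^ (1 - t) = 1 + (1 - t) * y := by
  rw [texp, one_div, Real.rpow_inv_rpow hy (sub_ne_zero.mpr ht.symm)]

lemma texp_tlog (ht : t ≠ 1) {x : ℝ} (hx : 0 ≤ x) : texp t (tlog t x) = x := by
  rw [texp, one_add_mul_tlog ht, one_div, Real.rpow_rpow_inv hx (sub_ne_zero.mpr ht.symm)]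

lemma texp_nonneg {y : ℝ} (hy : 0 ≤ 1 + (1 - t) * y) : 0 ≤ texp t y :=
  Real.rpow_nonneg hy _

/-- The paper's `θ̌ + r p̃ ^ (1 - t) = log_t (p̃ / K)`, with `K = λ / texp t (r λ ^ (1 - t))`. -/
lemma tlog_div_add_mul_rpow (ht : t ≠ 1) {x lam : ℝ} (hx : 0 ≤ x) (hlam : 0 < lam) {r : ℝ}
    (hr : 0 ≤ 1 + (1 - t) * (r * lam ^ (1 - t))) :
    tlog t (x / lam) + r * x ^ (1 - t) = tlog t (texp t (r * lam ^ (1 - t)) * (x / lam)) := by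
  unfold tlog
  rw [Real.mul_rpow (texp_nonneg hr) (div_nonneg hx hlam.le), texp_rpow_one_sub ht hr,
    Real.div_rpow hx hlam.le]
  field_simp
  ring

lemma one_add_mul_tlog_div_add_mul_rpow (ht : t ≠ 1) {x lam : ℝ} (hx : 0 ≤ x) (hlam : 0 < lam)
    (r : ℝ) :
    1 + (1 - t) * (tlog t (x / lam) + r * x ^ (1 - t)) =
      (x / lam) ^ (1 - t) * (1 + (1 - t) * (r * lam ^ (1 - t))) := by
  rw [mul_add, ← add_assoc, one_add_mul_tlog ht, Real.div_rpow hx hlam.le]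
  field_simp

lemma tsoftmax_tlog_mul {ι : Type*} [Fintype ι] (ht : t ≠ 1) {tstar : ℝ} (hs : tstar ≠ 0)
    {a : ℝ} (ha : 0 < a) {q : ι → ℝ} (hq : ∀ j, 0 ≤ q j) (i : ι) :
    tsoftmax t tstar (fun j => tlog t (a * q j)) i =
      tsoftmax t tstar (fun j => tlog t (q j)) i := by
  have hsum : ∑ j, (a * q j) ^ (1 / tstar) = a ^ (1 / tstar) * ∑ j, q j ^ (1 / tstar) := by
    rw [Finset.mul_sum]
    exact Finset.sum_congr rfl fun j _ => Real.mul_rpow ha.le (hq j)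
  simp only [tsoftmax, texp_tlog ht (mul_nonneg ha.le (hq _)), texp_tlog ht (hq _)]
  rw [hsum, Real.mul_rpow (Real.rpow_nonneg ha.le _)
      (Finset.sum_nonneg fun j _ => Real.rpow_nonneg (hq j) _), one_div,
    Real.rpow_inv_rpow ha.le hs, mul_div_mul_left _ _ ha.ne']

end Tempered

theorem tsoftmax_invariant {ι : Type*} [Fintype ι] (t : ℝ) (ht : t < 2) (ht1 : t ≠ 1)
    (p : ι → ℝ) (hp : ∀ i, 0 < p i) (lam : ℝ) (hlam : 0 < lam) (r : ℝ)
    (hpos : ∀ i, 0 < 1 + (1 - t) * (tlog t (p i / lam) + r * (p i) ^ (1 - t))) :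
    (fun i => tsoftmax t (1 / (2 - t)) (fun j => tlog t (p j / lam) + r * (p j) ^ (1 - t)) i) =
      fun i => tsoftmax t (1 / (2 - t)) (fun j => tlog t (p j / lam)) i := by
  funext i
  have hc : 0 < 1 + (1 - t) * (r * lam ^ (1 - t)) := by
    have h := hpos i
    rw [one_add_mul_tlog_div_add_mul_rpow ht1 (hp i).le hlam] at h
    exact pos_of_mul_pos_right h (Real.rpow_nonneg (div_nonneg (hp i).le hlam.le) _)
  have hshift : (fun j => tlog t (p j / lam) + r * p j ^ (1 - t)) =
      fun j => tlog t (texp t (r * lam ^ (1 - t)) * (p j / lam)) :=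
    funext fun j => tlog_div_add_mul_rpow ht1 (hp j).le hlam hc.le
  rw [hshift]
  exact tsoftmax_tlog_mul ht1 (one_div_ne_zero (by linarith)) (Real.rpow_pos_of_pos hc _)
    (fun j => div_nonneg (hp j).le hlam.le) i
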